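/- A mix-network pass preserves the multiset of plaintexts: for every commutative group G, element g ∈ G, natural sk, finite list of ciphertexts (c1_i, c2_i) ∈ G × G for i = 1, …, n, permutation π of {1, …, n}, and re-randomizers s_1, …, s_n ∈ ℕ, writing pk = g^sk, the multiset of decryptions under sk of the mixed ciphertexts ((c1_{π(i)} · g^{s_i}, c2_{π(i)} · pk^{s_i}))_{i=1}^n equals the multiset of decryptions under sk of the original ciphertexts ((c1_i, c2_i))_{i=1}^n. -/

import Mathlib

namespace ElGamal

variable {G : Type*} [CommGroup G]

def decrypt (sk : ℕ) (c : G × G) : G :=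
  c.2 * (c.1 ^ sk)⁻¹

def reencrypt (g pk : G) (s : ℕ) (c : G × G) : G × G :=
  (c.1 * g ^ s, c.2 * pk ^ s)

/-- The new mask `(g ^ sk) ^ s` cancels against `(g ^ s) ^ sk`. -/
theorem decrypt_reencrypt (g : G) (sk s : ℕ) (c : G × G) :
    decrypt sk (reencrypt g (g ^ sk) s c) = decrypt sk c := by
  simp only [decrypt, reencrypt]
  rw [pow_right_comm, mul_pow, mul_inv, mul_mul_mul_comm, mul_inv_cancel, mul_one]

end ElGamal

/-- A mix-network pass preserves the multiset of plaintexts: permuting a list of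
ElGamal ciphertexts and re-encrypting each entry with fresh randomness leaves the
multiset of decryptions unchanged. -/
theorem mixnet_preserves_plaintext_multiset {G : Type*} [CommGroup G]
    (g : G) (sk n : ℕ) (c : Fin n → G × G) (π : Equiv.Perm (Fin n)) (s : Fin n → ℕ) :
    (↑(List.ofFn fun i =>
        ((c (π i)).2 * (g ^ sk) ^ s i) * (((c (π i)).1 * g ^ s i) ^ sk)⁻¹) : Multiset G) =
      ↑(List.ofFn fun i => (c i).2 * ((c i).1 ^ sk)⁻¹) := by
  have mixed_eq : (fun i =>
      ((c (π i)).2 * (g ^ sk) ^ s i) * (((c (π i)).1 * g ^ s i) ^ sk)⁻¹) =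
      (ElGamal.decrypt sk ∘ c) ∘ π :=
    funext fun i => ElGamal.decrypt_reencrypt g sk (s i) (c (π i))
  rw [mixed_eq, Multiset.coe_eq_coe]
  exact π.ofFn_comp_perm (ElGamal.decrypt sk ∘ c)
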